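/- arXiv:1107.1094 — 4 statements merged into one kernel-verified Lean document; each statement's English description precedes it below -/
import Mathlib

section
/- Suppose A_n ∈ SL(2,ℝ) satisfy (1/n) log ‖A_n‖ → 0 and (1/n) log ‖A_n ⋯ A_1‖ → γ for some γ > 0 as n → ∞. Then there exists a one-dimensional linear subspace V ⊂ ℝ² such that (1/n) log ‖A_n ⋯ A_1 v‖ → -γ for every v ∈ V \ {0}, and (1/n) log ‖A_n ⋯ A_1 v‖ → γ for every v ∈ ℝ² \ V. -/
/-!
For `M ∈ SL(2,ℝ)` the singular values are `‖M‖` and `‖M‖⁻¹`. Let `f n` be a unit vector most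
contracted by `P n`. Since `‖x‖ ≤ ‖A‖ ‖A x‖` in `SL(2,ℝ)`, the vector `f (n+1)` satisfies
`‖P n f (n+1)‖ ≤ ‖A (n+1)‖ / ‖P (n+1)‖`, while `P n` expands the component of `f (n+1)`
orthogonal to `f n` by `‖P n‖`. After fixing signs this gives
`‖f (n+1) - f n‖ ≲ ‖A (n+1)‖ / (‖P n‖ ‖P (n+1)‖) = e^{(-2γ + o(1)) n}`, so `f n` converges to
some `s` with `‖s - f n‖ = e^{(-2γ + o(1)) n}`. Then
`‖P n‖⁻¹ ≤ ‖P n s‖ ≤ ‖P n‖⁻¹ + ‖P n‖ ‖s - f n‖ = e^{(-γ + o(1)) n}`, and every `v ∉ ℝ s` keeps a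
component bounded below along the most expanded direction of `P n`, so `‖P n v‖ ≈ ‖P n‖`.
-/

open Filter

noncomputable section

/-- The operator (Euclidean) norm of a real 2×2 matrix. -/
def opNorm (M : Matrix (Fin 2) (Fin 2) ℝ) : ℝ := ‖Matrix.toEuclideanCLM (𝕜 := ℝ) M‖

open Asymptotics Real Topology

/-- The exponential growth rate `limsup (1/n) log |f n|` is at most `c`. -/
def ExpGrowthLE (f : ℕ → ℝ) (c : ℝ) : Prop :=
  ∀ c' > c, f =O[atTop] fun n => exp (c' * n)

/-- The exponential growth rate `liminf (1/n) log |f n|` is at least `c`. -/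
def ExpGrowthGE (f : ℕ → ℝ) (c : ℝ) : Prop :=
  ∀ c' < c, (fun n : ℕ => exp (c' * n)) =O[atTop] f

section ExpGrowth

variable {f g : ℕ → ℝ} {a b c : ℝ}

lemma exp_mul_isLittleO_exp_mul (h : a < b) :
    (fun n : ℕ => exp (a * n)) =o[atTop] fun n => exp (b * n) := by
  rw [isLittleO_exp_comp_exp_comp]
  simpa [← sub_mul] using
    tendsto_natCast_atTop_atTop.const_mul_atTop (sub_pos.2 h)

lemma Asymptotics.IsBigO.expGrowthLE (hfg : f =O[atTop] g) (hg : ExpGrowthLE g c) :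
    ExpGrowthLE f c :=
  fun c' hc => hfg.trans (hg c' hc)

lemma Asymptotics.IsBigO.expGrowthGE (hgf : g =O[atTop] f) (hg : ExpGrowthGE g c) :
    ExpGrowthGE f c :=
  fun c' hc => (hg c' hc).trans hgf

namespace ExpGrowthLE

lemma mono (h : ExpGrowthLE f a) (hab : a ≤ b) : ExpGrowthLE f b :=
  fun c hc => h c (hab.trans_lt hc)

lemma add (hf : ExpGrowthLE f c) (hg : ExpGrowthLE g c) : ExpGrowthLE (f + g) c :=
  fun c' hc => (hf c' hc).add (hg c' hc)

lemma mul (hf : ExpGrowthLE f a) (hg : ExpGrowthLE g b) : ExpGrowthLE (f * g) (a + b) := by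
  intro c hc
  have key := (hf (a + (c - (a + b)) / 2) (by linarith)).mul
    (hg (b + (c - (a + b)) / 2) (by linarith))
  refine key.congr_right fun n => ?_
  rw [← exp_add]
  ring_nf

lemma comp_succ (h : ExpGrowthLE f c) : ExpGrowthLE (fun n => f (n + 1)) c := by
  intro c' hc
  refine ((h c' hc).comp_tendsto (tendsto_add_atTop_nat 1)).trans
    (IsBigO.of_bound (exp c') (Eventually.of_forall fun n => ?_))
  simp only [Function.comp_apply, Nat.cast_add, Nat.cast_one, norm_eq_abs, abs_exp, ← exp_add]
  ring_nf
  exact le_rfl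

lemma inv (h : ExpGrowthLE f c) (hf : ∀ᶠ n in atTop, f n ≠ 0) : ExpGrowthGE f⁻¹ (-c) := by
  intro c' hc
  refine ((h (-c') (by linarith)).inv_rev (hf.mono fun n hn h0 => absurd h0 hn)).congr_left
    fun n => ?_
  rw [← exp_neg, neg_mul, neg_neg]

lemma eventually_le (h : ExpGrowthLE f c) {c' : ℝ} (hc : c < c') :
    ∀ᶠ n : ℕ in atTop, |f n| ≤ exp (c' * n) := by
  have := ((h ((c + c') / 2) (by linarith)).trans_isLittleO
    (exp_mul_isLittleO_exp_mul (by linarith : (c + c') / 2 < c'))).bound one_pos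
  filter_upwards [this] with n hn
  simpa using hn

end ExpGrowthLE

namespace ExpGrowthGE

lemma comp_succ (h : ExpGrowthGE f c) : ExpGrowthGE (fun n => f (n + 1)) c := by
  intro c' hc
  refine (IsBigO.of_bound (exp (-c')) (Eventually.of_forall fun n => ?_)).trans
    ((h c' hc).comp_tendsto (tendsto_add_atTop_nat 1))
  simp only [Function.comp_apply, Nat.cast_add, Nat.cast_one, norm_eq_abs, abs_exp, ← exp_add]
  ring_nf
  exact le_rfl

lemma inv (h : ExpGrowthGE f c) : ExpGrowthLE f⁻¹ (-c) := by
  intro c' hc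
  refine ((h (-c') (by linarith)).inv_rev (Eventually.of_forall fun n h0 =>
    absurd h0 (exp_ne_zero _))).congr_right fun n => ?_
  rw [← exp_neg, neg_mul, neg_neg]

lemma eventually_le (h : ExpGrowthGE f c) {c' : ℝ} (hc : c' < c) :
    ∀ᶠ n : ℕ in atTop, exp (c' * n) ≤ |f n| := by
  have := (exp_mul_isLittleO_exp_mul (by linarith : c' < (c' + c) / 2)).trans_isBigO
    (h ((c' + c) / 2) (by linarith)) |>.bound one_pos
  filter_upwards [this] with n hn
  simpa using hn

end ExpGrowthGE

lemma one_div_mul_log_le_iff {n : ℕ} (hn : 0 < n) {x : ℝ} (hx : x ≠ 0) :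
    1 / (n : ℝ) * log x ≤ c ↔ |x| ≤ exp (c * n) := by
  rw [one_div_mul_eq_div, div_le_iff₀ (by exact_mod_cast hn), ← log_abs,
    log_le_iff_le_exp (abs_pos.2 hx)]

lemma le_one_div_mul_log_iff {n : ℕ} (hn : 0 < n) {x : ℝ} (hx : x ≠ 0) :
    c ≤ 1 / (n : ℝ) * log x ↔ exp (c * n) ≤ |x| := by
  rw [one_div_mul_eq_div, le_div_iff₀ (by exact_mod_cast hn), ← log_abs,
    le_log_iff_exp_le (abs_pos.2 hx)]

lemma ExpGrowthLE.of_tendsto (h : Tendsto (fun n : ℕ => 1 / (n : ℝ) * log (f n)) atTop (𝓝 c)) :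
    ExpGrowthLE f c := by
  intro c' hc
  refine Eventually.isBigO ?_
  filter_upwards [h.eventually (eventually_lt_nhds hc), eventually_gt_atTop 0] with n hlt hn
  rcases eq_or_ne (f n) 0 with h0 | h0
  · simp [h0, (exp_pos _).le]
  · simpa using (one_div_mul_log_le_iff hn h0).1 hlt.le

lemma ExpGrowthGE.of_tendsto (h : Tendsto (fun n : ℕ => 1 / (n : ℝ) * log (f n)) atTop (𝓝 c))
    (hf : ∀ᶠ n in atTop, f n ≠ 0) : ExpGrowthGE f c := by
  intro c' hc
  refine IsBigO.of_bound' ?_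
  filter_upwards [h.eventually (eventually_gt_nhds hc), eventually_gt_atTop 0, hf]
    with n hlt hn h0
  simpa using (le_one_div_mul_log_iff hn h0).1 hlt.le

lemma ExpGrowthLE.tendsto_one_div_mul_log (hle : ExpGrowthLE f c) (hge : ExpGrowthGE f c) :
    Tendsto (fun n : ℕ => 1 / (n : ℝ) * log (f n)) atTop (𝓝 c) := by
  have hf : ∀ᶠ n in atTop, f n ≠ 0 := (hge.eventually_le (sub_one_lt c)).mono
    fun n hn h0 => by simp [h0] at hn; exact (exp_pos _).not_ge hn
  refine tendsto_order.2 ⟨fun a ha => ?_, fun a ha => ?_⟩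
  · filter_upwards [hge.eventually_le (by linarith : (a + c) / 2 < c), eventually_gt_atTop 0, hf]
      with n hle hn h0
    linarith [(le_one_div_mul_log_iff hn h0).2 hle]
  · filter_upwards [hle.eventually_le (by linarith : c < (c + a) / 2), eventually_gt_atTop 0, hf]
      with n hle hn h0
    linarith [(one_div_mul_log_le_iff hn h0).2 hle]

lemma ExpGrowthLE.exists_tendsto {X : Type*} [PseudoMetricSpace X] [CompleteSpace X]
    {u : ℕ → X} (ha : a < 0) (h : ExpGrowthLE (fun n => dist (u n) (u (n + 1))) a) :
    ∃ x, Tendsto u atTop (𝓝 x) ∧ ExpGrowthLE (fun n => dist (u n) x) a := by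
  have geometric : ∀ b > a, ∃ C > 0, ∀ n, dist (u n) (u (n + 1)) ≤ C * exp b ^ n := by
    intro b hb
    obtain ⟨C, hC, hbound⟩ := bound_of_isBigO_nat_atTop (h b hb)
    refine ⟨C, hC, fun n => ?_⟩
    simpa [← exp_nat_mul, mul_comm b] using hbound (exp_ne_zero _)
  obtain ⟨C, -, hC⟩ := geometric (a / 2) (by linarith)
  obtain ⟨x, hx⟩ := cauchySeq_tendsto_of_complete
    (cauchySeq_of_le_geometric _ C (exp_lt_one_iff.2 (by linarith)) hC)
  refine ⟨x, hx, fun c hc => ?_⟩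
  obtain ⟨C', hC'pos, hC'⟩ := geometric (min c (a / 2)) (lt_min hc (by linarith))
  have hr : exp (min c (a / 2)) < 1 := exp_lt_one_iff.2 ((min_le_right _ _).trans_lt (by linarith))
  refine IsBigO.of_bound (C' / (1 - exp (min c (a / 2)))) (Eventually.of_forall fun n => ?_)
  rw [norm_of_nonneg dist_nonneg, norm_of_nonneg (exp_pos _).le, div_mul_eq_mul_div]
  refine (dist_le_of_le_geometric_of_tendsto _ C' hr hC' hx n).trans ?_
  gcongr
  rw [← exp_nat_mul, mul_comm]
  exact exp_le_exp.2 (mul_le_mul_of_nonneg_right (min_le_left _ _) (Nat.cast_nonneg n))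

end ExpGrowth

open Module
open scoped RealInnerProductSpace

variable {E : Type*} [NormedAddCommGroup E] [InnerProductSpace ℝ E]

section InnerProductSpace

variable {F : Type*} [NormedAddCommGroup F] [InnerProductSpace ℝ F]

lemma exists_eq_or_eq_neg_inner_succ_nonneg (u : ℕ → F) :
    ∃ w : ℕ → F, (∀ n, w n = u n ∨ w n = -u n) ∧ ∀ n, 0 ≤ ⟪w (n + 1), w n⟫ := by
  let w : ℕ → F := fun n => Nat.rec (u 0)
    (fun m wm => if 0 ≤ ⟪u (m + 1), wm⟫ then u (m + 1) else -u (m + 1)) n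
  have hsucc : ∀ n, w (n + 1) = if 0 ≤ ⟪u (n + 1), w n⟫ then u (n + 1) else -u (n + 1) :=
    fun n => rfl
  refine ⟨w, fun n => ?_, fun n => ?_⟩
  · cases n with
    | zero => exact Or.inl rfl
    | succ m => rw [hsucc]; split_ifs <;> simp
  · rw [hsucc]
    split_ifs with h
    · exact h
    · rw [inner_neg_left]; linarith

lemma norm_sub_sq_le_of_inner_nonneg {x y : F} (hx : ‖x‖ = 1) (hy : ‖y‖ = 1) (h : 0 ≤ ⟪x, y⟫) :
    ‖x - y‖ ^ 2 ≤ 2 * (1 - ⟪x, y⟫ ^ 2) := by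
  have h1 : ⟪x, y⟫ ≤ 1 := (real_inner_le_norm x y).trans (by rw [hx, hy, one_mul])
  rw [norm_sub_sq_real, hx, hy]
  nlinarith

end InnerProductSpace

/-- The singular value decomposition of `T ∈ SL(2,ℝ)`: `T` stretches by `‖T‖` along `e` and by
`‖T‖⁻¹` along the unit vector `f`. -/
structure IsSingularPair (T : E →L[ℝ] E) (e f : E) : Prop where
  norm_right : ‖f‖ = 1
  inner_sq_add_inner_sq : ∀ v, ⟪e, v⟫ ^ 2 + ⟪f, v⟫ ^ 2 = ‖v‖ ^ 2
  norm_apply_sq : ∀ v, ‖T v‖ ^ 2 = ‖T‖ ^ 2 * ⟪e, v⟫ ^ 2 + ⟪f, v⟫ ^ 2 / ‖T‖ ^ 2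

namespace IsSingularPair

variable {T : E →L[ℝ] E} {e f : E} (h : IsSingularPair T e f)
include h

lemma neg_right : IsSingularPair T e (-f) where
  norm_right := by rw [norm_neg, h.norm_right]
  inner_sq_add_inner_sq v := by rw [inner_neg_left, neg_sq, h.inner_sq_add_inner_sq]
  norm_apply_sq v := by rw [inner_neg_left, neg_sq, h.norm_apply_sq]

lemma inner_left_right : ⟪e, f⟫ = 0 := by
  have := h.inner_sq_add_inner_sq f
  rw [real_inner_self_eq_norm_sq, h.norm_right] at this
  simpa using this

lemma norm_apply_right : ‖T f‖ = ‖T‖⁻¹ := by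
  have := h.norm_apply_sq f
  rw [h.inner_left_right, real_inner_self_eq_norm_sq, h.norm_right] at this
  rw [← sq_eq_sq₀ (norm_nonneg _) (inv_nonneg.2 (norm_nonneg _)), this]
  simp

lemma abs_inner_left_mul_norm_le (v : E) : |⟪e, v⟫| * ‖T‖ ≤ ‖T v‖ := by
  rw [← pow_le_pow_iff_left₀ (by positivity) (norm_nonneg _) two_ne_zero, mul_pow, sq_abs,
    h.norm_apply_sq, mul_comm]
  exact le_add_of_nonneg_right (by positivity)

lemma norm_le_norm_mul_norm_apply (hT : 1 ≤ ‖T‖) (v : E) : ‖v‖ ≤ ‖T‖ * ‖T v‖ := by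
  rw [← pow_le_pow_iff_left₀ (norm_nonneg _) (by positivity) two_ne_zero, mul_pow,
    h.norm_apply_sq, ← h.inner_sq_add_inner_sq v, mul_add, mul_div_cancel₀ _ (by positivity)]
  gcongr
  calc ⟪e, v⟫ ^ 2 = 1 * 1 * ⟪e, v⟫ ^ 2 := by ring
    _ ≤ ‖T‖ ^ 2 * ‖T‖ ^ 2 * ⟪e, v⟫ ^ 2 := by gcongr <;> nlinarith
    _ = _ := by ring

end IsSingularPair

lemma IsSingularPair.norm_sub_le {A P : E →L[ℝ] E} {e f e' f' : E} (hpair : IsSingularPair P e f)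
    (hpair' : IsSingularPair (A ∘L P) e' f') (hA : ∀ x, ‖x‖ ≤ ‖A‖ * ‖A x‖) (hP : 0 < ‖P‖)
    (hff' : 0 ≤ ⟪f', f⟫) : ‖f' - f‖ ≤ 2 * (‖A‖ * (‖P‖⁻¹ * ‖A ∘L P‖⁻¹)) := by
  have hcontract : |⟪e, f'⟫| * ‖P‖ ≤ ‖A‖ * ‖A ∘L P‖⁻¹ :=
    calc |⟪e, f'⟫| * ‖P‖ ≤ ‖P f'‖ := hpair.abs_inner_left_mul_norm_le f'
      _ ≤ ‖A‖ * ‖A (P f')‖ := hA _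
      _ = ‖A‖ * ‖A ∘L P‖⁻¹ := by rw [← ContinuousLinearMap.comp_apply, hpair'.norm_apply_right]
  have hangle : ‖f' - f‖ ≤ 2 * |⟪e, f'⟫| := by
    have hsub := norm_sub_sq_le_of_inner_nonneg hpair'.norm_right hpair.norm_right hff'
    have hpar := hpair.inner_sq_add_inner_sq f'
    rw [hpair'.norm_right, real_inner_comm f' f] at hpar
    rw [← pow_le_pow_iff_left₀ (norm_nonneg _) (by positivity) two_ne_zero, mul_pow, sq_abs]
    nlinarith [sq_nonneg ⟪e, f'⟫]
  calc ‖f' - f‖ ≤ 2 * |⟪e, f'⟫| := hangle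
    _ ≤ 2 * (‖A‖ * ‖A ∘L P‖⁻¹ * ‖P‖⁻¹) := by gcongr; exact (le_mul_inv_iff₀ hP).2 hcontract
    _ = _ := by ring

section FiniteDimensional

variable [FiniteDimensional ℝ E]

lemma LinearMap.norm_apply_sq_eq_sum_eigenvalues {F : Type*} [NormedAddCommGroup F]
    [InnerProductSpace ℝ F] [FiniteDimensional ℝ F] (T : E →ₗ[ℝ] F) {n : ℕ}
    (hn : finrank ℝ E = n) (v : E) :
    ‖T v‖ ^ 2 = ∑ i, T.isSymmetric_adjoint_comp_self.eigenvalues hn i *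
      ⟪T.isSymmetric_adjoint_comp_self.eigenvectorBasis hn i, v⟫ ^ 2 := by
  set hS := T.isSymmetric_adjoint_comp_self
  rw [← real_inner_self_eq_norm_sq, ← adjoint_inner_left,
    ← (hS.eigenvectorBasis hn).sum_inner_mul_inner]
  refine Finset.sum_congr rfl fun i _ => ?_
  have := hS v (hS.eigenvectorBasis hn i)
  rw [comp_apply] at this
  rw [this, hS.apply_eigenvectorBasis, real_inner_comm]
  simp only [RCLike.ofReal_real_eq_id, id_eq, real_inner_smul_left]
  ring

lemma LinearMap.prod_eigenvalues_adjoint_comp_self (T : E →ₗ[ℝ] E) {n : ℕ}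
    (hn : finrank ℝ E = n) :
    ∏ i, T.isSymmetric_adjoint_comp_self.eigenvalues hn i = T.det ^ 2 := by
  have := T.normDet_sq
  rw [LinearMap.normDet_eq_abs_det, T.isSymmetric_adjoint_comp_self.det_eq_prod_eigenvalues hn,
    sq_abs] at this
  simpa using this.symm

namespace ContinuousLinearMap

variable {n : ℕ} (T : E →L[ℝ] E) (hn : finrank ℝ E = n + 1)
include hn

lemma norm_sq_eq_eigenvalues_zero :
    ‖T‖ ^ 2 = (T : E →ₗ[ℝ] E).isSymmetric_adjoint_comp_self.eigenvalues hn 0 := by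
  set hS := (T : E →ₗ[ℝ] E).isSymmetric_adjoint_comp_self
  set μ := hS.eigenvalues hn
  set b := hS.eigenvectorBasis hn
  have hμ : ∀ i, 0 ≤ μ i := (T : E →ₗ[ℝ] E).isPositive_adjoint_comp_self.nonneg_eigenvalues hn
  have hnorm : ∀ v, ‖T v‖ ^ 2 = ∑ i, μ i * ⟪b i, v⟫ ^ 2 :=
    (T : E →ₗ[ℝ] E).norm_apply_sq_eq_sum_eigenvalues hn
  apply le_antisymm
  · have hle : ∀ v, ‖T v‖ ≤ √(μ 0) * ‖v‖ := fun v => by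
      refine le_of_sq_le_sq ?_ (by positivity)
      rw [mul_pow, sq_sqrt (hμ 0), ← b.sum_sq_inner_right v, Finset.mul_sum]
      refine (hnorm v).trans_le (Finset.sum_le_sum fun i _ => ?_)
      gcongr
      exact hS.eigenvalues_antitone hn (Fin.zero_le i)
    calc ‖T‖ ^ 2 ≤ √(μ 0) ^ 2 := by
          gcongr; exact opNorm_le_bound _ (sqrt_nonneg _) hle
      _ = μ 0 := sq_sqrt (hμ 0)
  · calc μ 0 = ‖T (b 0)‖ ^ 2 := by
          rw [hnorm]; simp [b, b.inner_eq_ite]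
      _ ≤ ‖T‖ ^ 2 := by
          gcongr; simpa using T.le_opNorm (b 0)

lemma one_le_norm_of_det_eq_one (hT : T.det = 1) : 1 ≤ ‖T‖ := by
  set hS := (T : E →ₗ[ℝ] E).isSymmetric_adjoint_comp_self
  set μ := hS.eigenvalues hn
  have hμ : ∀ i, 0 ≤ μ i := (T : E →ₗ[ℝ] E).isPositive_adjoint_comp_self.nonneg_eigenvalues hn
  have hprod : ∏ i, μ i = 1 := by
    simpa [hT] using (T : E →ₗ[ℝ] E).prod_eigenvalues_adjoint_comp_self hn
  have : 1 ≤ μ 0 ^ (n + 1) := by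
    calc (1 : ℝ) = ∏ i, μ i := hprod.symm
      _ ≤ ∏ _i : Fin (n + 1), μ 0 :=
          Finset.prod_le_prod (fun i _ => hμ i) fun i _ =>
            hS.eigenvalues_antitone hn (Fin.zero_le i)
      _ = μ 0 ^ (n + 1) := by simp
  rw [← one_le_pow_iff_of_nonneg (norm_nonneg T) two_ne_zero, T.norm_sq_eq_eigenvalues_zero hn]
  exact (one_le_pow_iff_of_nonneg (hμ 0) (Nat.succ_ne_zero n)).1 this

end ContinuousLinearMap

lemma exists_isSingularPair (T : E →L[ℝ] E) (hE : finrank ℝ E = 2) (hT : T.det = 1) :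
    ∃ e f, IsSingularPair T e f := by
  set hS := (T : E →ₗ[ℝ] E).isSymmetric_adjoint_comp_self
  set μ := hS.eigenvalues hE
  set b := hS.eigenvectorBasis hE
  have hμ0 : μ 0 = ‖T‖ ^ 2 := (T.norm_sq_eq_eigenvalues_zero (n := 1) hE).symm
  have hprod : μ 0 * μ 1 = 1 := by
    simpa [Fin.prod_univ_two, hT] using (T : E →ₗ[ℝ] E).prod_eigenvalues_adjoint_comp_self hE
  have hμ1 : μ 1 = 1 / ‖T‖ ^ 2 := hμ0 ▸ eq_one_div_of_mul_eq_one_right hprod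
  refine ⟨b 0, b 1, b.orthonormal.1 1, fun v => ?_, fun v => ?_⟩
  · simpa [Fin.sum_univ_two] using b.sum_sq_inner_right v
  · calc ‖T v‖ ^ 2 = ∑ i, μ i * ⟪b i, v⟫ ^ 2 :=
          (T : E →ₗ[ℝ] E).norm_apply_sq_eq_sum_eigenvalues hE v
      _ = _ := by rw [Fin.sum_univ_two, hμ0, hμ1]; ring

lemma ContinuousLinearMap.norm_le_norm_mul_norm_apply_of_det_eq_one (T : E →L[ℝ] E)
    (hE : finrank ℝ E = 2) (hT : T.det = 1) (v : E) : ‖v‖ ≤ ‖T‖ * ‖T v‖ :=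
  have ⟨_, _, h⟩ := exists_isSingularPair T hE hT
  h.norm_le_norm_mul_norm_apply (T.one_le_norm_of_det_eq_one (n := 1) hE hT) v


end FiniteDimensional

lemma expGrowthLE_norm_apply {F G : Type*} [NormedAddCommGroup F] [NormedSpace ℝ F]
    [NormedAddCommGroup G] [NormedSpace ℝ G] {P : ℕ → F →L[ℝ] G} {γ : ℝ}
    (hP : ExpGrowthLE (fun n => ‖P n‖) γ) (v : F) : ExpGrowthLE (fun n => ‖P n v‖) γ := by
  refine (IsBigO.of_bound ‖v‖ (Eventually.of_forall fun n => ?_)).expGrowthLE hP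
  simpa [mul_comm] using (P n).le_opNorm v

section Cocycle

variable {A P : ℕ → E →L[ℝ] E} {e f : ℕ → E} {γ : ℝ}

lemma expGrowthLE_norm_apply_of_expGrowthLE_dist (hpair : ∀ n, IsSingularPair (P n) (e n) (f n))
    (hPle : ExpGrowthLE (fun n => ‖P n‖) γ) (hPge : ExpGrowthGE (fun n => ‖P n‖) γ) {s : E}
    (hs : ExpGrowthLE (fun n => dist (f n) s) (-2 * γ)) :
    ExpGrowthLE (fun n => ‖P n s‖) (-γ) := by
  have hbound : ∀ n, ‖P n s‖ ≤ ‖P n‖⁻¹ + ‖P n‖ * dist (f n) s := fun n =>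
    calc ‖P n s‖ = ‖P n (f n) + P n (s - f n)‖ := by rw [← map_add, add_sub_cancel]
      _ ≤ ‖P n (f n)‖ + ‖P n‖ * ‖s - f n‖ := norm_add_le_of_le le_rfl ((P n).le_opNorm _)
      _ = _ := by rw [(hpair n).norm_apply_right, dist_comm, dist_eq_norm]
  refine (IsBigO.of_bound' (Eventually.of_forall fun n => ?_)).expGrowthLE
    (hPge.inv.add ((hPle.mul hs).mono (by linarith)))
  rw [norm_norm]
  exact (hbound n).trans (le_norm_self _)

lemma expGrowthGE_norm_apply_of_notMem_span (hpair : ∀ n, IsSingularPair (P n) (e n) (f n))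
    (hP : ExpGrowthGE (fun n => ‖P n‖) γ) {s : E} (hf : Tendsto f atTop (𝓝 s)) (hs : ‖s‖ = 1)
    {v : E} (hv : v ∉ ℝ ∙ s) : ExpGrowthGE (fun n => ‖P n v‖) γ := by
  set c := ‖v‖ ^ 2 - ⟪s, v⟫ ^ 2
  have hc : 0 < c := by
    have hne : v - ⟪s, v⟫ • s ≠ 0 := fun h =>
      hv (sub_eq_zero.1 h ▸ Submodule.smul_mem _ _ (Submodule.mem_span_singleton_self s))
    have : ‖v - ⟪s, v⟫ • s‖ ^ 2 = c := by
      rw [norm_sub_sq_real, real_inner_smul_right, norm_smul, hs]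
      simp only [norm_eq_abs, mul_one, sq_abs, c, real_inner_comm v s]
      ring
    exact this ▸ pow_pos (norm_pos_iff.2 hne) 2
  have hlim : Tendsto (fun n => ⟪e n, v⟫ ^ 2) atTop (𝓝 c) := by
    refine (((hf.inner tendsto_const_nhds).pow 2).const_sub (‖v‖ ^ 2)).congr fun n => ?_
    rw [← (hpair n).inner_sq_add_inner_sq v]
    ring
  have hδ : ∀ᶠ n in atTop, √(c / 2) ≤ |⟪e n, v⟫| :=
    (hlim.eventually (eventually_gt_nhds (half_lt_self hc))).mono fun n hn => by
      rw [← sqrt_sq_eq_abs]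
      exact sqrt_le_sqrt hn.le
  refine (IsBigO.of_bound (√(c / 2))⁻¹ ?_).expGrowthGE hP
  filter_upwards [hδ] with n hn
  rw [norm_norm, norm_norm, inv_mul_eq_div, le_div_iff₀ (by positivity)]
  calc ‖P n‖ * √(c / 2) ≤ |⟪e n, v⟫| * ‖P n‖ := by rw [mul_comm]; gcongr
    _ ≤ ‖P n v‖ := (hpair n).abs_inner_left_mul_norm_le v

variable [FiniteDimensional ℝ E]

lemma expGrowthGE_norm_apply (hE : finrank ℝ E = 2) (hdetP : ∀ n, (P n).det = 1)
    (hP : ExpGrowthLE (fun n => ‖P n‖) γ) {v : E} (hv : v ≠ 0) :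
    ExpGrowthGE (fun n => ‖P n v‖) (-γ) := by
  have hP1 : ∀ n, 1 ≤ ‖P n‖ := fun n => (P n).one_le_norm_of_det_eq_one (n := 1) hE (hdetP n)
  refine (IsBigO.of_bound ‖v‖⁻¹ (Eventually.of_forall fun n => ?_)).expGrowthGE
    (hP.inv (Eventually.of_forall fun n => (zero_lt_one.trans_le (hP1 n)).ne'))
  rw [Pi.inv_apply, norm_inv, norm_norm, norm_norm, inv_mul_eq_div,
    le_div_iff₀ (norm_pos_iff.2 hv), inv_mul_le_iff₀ (by linarith [hP1 n])]
  exact (P n).norm_le_norm_mul_norm_apply_of_det_eq_one hE (hdetP n) v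

lemma expGrowthLE_dist_succ_of_isSingularPair (hE : finrank ℝ E = 2) (hdetA : ∀ n, (A n).det = 1)
    (hdetP : ∀ n, (P n).det = 1) (hAP : ∀ n, P (n + 1) = A (n + 1) ∘L P n)
    (hpair : ∀ n, IsSingularPair (P n) (e n) (f n)) (hf : ∀ n, 0 ≤ ⟪f (n + 1), f n⟫)
    (hA : ExpGrowthLE (fun n => ‖A n‖) 0) (hP : ExpGrowthGE (fun n => ‖P n‖) γ) :
    ExpGrowthLE (fun n => dist (f n) (f (n + 1))) (-2 * γ) := by
  have hbound : ∀ n, dist (f n) (f (n + 1)) ≤ 2 * (‖A (n + 1)‖ * (‖P n‖⁻¹ * ‖P (n + 1)‖⁻¹)) := by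
    intro n
    rw [dist_comm, dist_eq_norm, hAP]
    exact (hpair n).norm_sub_le (hAP n ▸ hpair (n + 1))
      ((A (n + 1)).norm_le_norm_mul_norm_apply_of_det_eq_one hE (hdetA _))
      (zero_lt_one.trans_le ((P n).one_le_norm_of_det_eq_one (n := 1) hE (hdetP n))) (hf n)
  refine ((IsBigO.of_bound 2 (Eventually.of_forall fun n => ?_)).expGrowthLE
    (hA.comp_succ.mul (hP.inv.mul hP.comp_succ.inv))).mono (by linarith)
  rw [norm_of_nonneg dist_nonneg]
  exact (hbound n).trans (mul_le_mul_of_nonneg_left (le_norm_self _) zero_le_two)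

lemma exists_stable_vector (hE : finrank ℝ E = 2) (hdetA : ∀ n, (A n).det = 1)
    (hdetP : ∀ n, (P n).det = 1) (hAP : ∀ n, P (n + 1) = A (n + 1) ∘L P n)
    (hA : ExpGrowthLE (fun n => ‖A n‖) 0) (hγ : 0 < γ)
    (hPle : ExpGrowthLE (fun n => ‖P n‖) γ) (hPge : ExpGrowthGE (fun n => ‖P n‖) γ) :
    ∃ s : E, s ≠ 0 ∧ ExpGrowthLE (fun n => ‖P n s‖) (-γ) ∧
      ∀ v ∉ ℝ ∙ s, ExpGrowthGE (fun n => ‖P n v‖) γ := by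
  choose e f₀ hpair₀ using fun n => exists_isSingularPair (P n) hE (hdetP n)
  obtain ⟨f, hf, hinner⟩ := exists_eq_or_eq_neg_inner_succ_nonneg f₀
  have hpair : ∀ n, IsSingularPair (P n) (e n) (f n) := fun n =>
    (hf n).elim (fun h => h ▸ hpair₀ n) fun h => h ▸ (hpair₀ n).neg_right
  obtain ⟨s, hfs, hdist⟩ :=
    (expGrowthLE_dist_succ_of_isSingularPair hE hdetA hdetP hAP hpair hinner hA hPge).exists_tendsto
      (by linarith)
  have hs : ‖s‖ = 1 :=
    tendsto_nhds_unique hfs.norm (by simp only [fun n => (hpair n).norm_right, tendsto_const_nhds])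
  exact ⟨s, norm_ne_zero_iff.1 (by simp [hs]),
    expGrowthLE_norm_apply_of_expGrowthLE_dist hpair hPle hPge hdist,
    fun v hv => expGrowthGE_norm_apply_of_notMem_span hpair hPge hfs hs hv⟩

theorem exists_oseledets_subspace (hE : finrank ℝ E = 2) (hdetA : ∀ n, (A n).det = 1)
    (hdetP : ∀ n, (P n).det = 1) (hAP : ∀ n, P (n + 1) = A (n + 1) ∘L P n)
    (hA : Tendsto (fun n : ℕ => 1 / (n : ℝ) * log ‖A n‖) atTop (𝓝 0)) (hγ : 0 < γ)
    (hP : Tendsto (fun n : ℕ => 1 / (n : ℝ) * log ‖P n‖) atTop (𝓝 γ)) :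
    ∃ V : Submodule ℝ E, finrank ℝ V = 1 ∧
      (∀ v ∈ V, v ≠ 0 → Tendsto (fun n : ℕ => 1 / (n : ℝ) * log ‖P n v‖) atTop (𝓝 (-γ))) ∧
      (∀ v ∉ V, Tendsto (fun n : ℕ => 1 / (n : ℝ) * log ‖P n v‖) atTop (𝓝 γ)) := by
  have hPle := ExpGrowthLE.of_tendsto hP
  have hPge := ExpGrowthGE.of_tendsto hP (Eventually.of_forall fun n =>
    (zero_lt_one.trans_le ((P n).one_le_norm_of_det_eq_one (n := 1) hE (hdetP n))).ne')
  obtain ⟨s, hs, hstable, hunstable⟩ :=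
    exists_stable_vector hE hdetA hdetP hAP (ExpGrowthLE.of_tendsto hA) hγ hPle hPge
  refine ⟨ℝ ∙ s, finrank_span_singleton hs, fun v hv hv0 => ?_, fun v hv => ?_⟩
  · obtain ⟨t, rfl⟩ := Submodule.mem_span_singleton.1 hv
    refine ExpGrowthLE.tendsto_one_div_mul_log ?_ (expGrowthGE_norm_apply hE hdetP hPle hv0)
    refine (IsBigO.of_bound |t| (Eventually.of_forall fun n => ?_)).expGrowthLE hstable
    simp [norm_smul]
  · exact (expGrowthLE_norm_apply hPle v).tendsto_one_div_mul_log (hunstable v hv)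

end Cocycle

/-- **The Oseledec–Ruelle theorem for `SL(2,ℝ)` cocycles.** Suppose `A n ∈ SL(2,ℝ)` satisfy
`(1/n) log ‖A n‖ → 0` and `(1/n) log ‖A n ⋯ A 1‖ → γ > 0`, where `P n = A n ⋯ A 1` is the
ordered product. Then there is a one-dimensional subspace `V ⊂ ℝ²` such that
`(1/n) log ‖P n v‖ → -γ` for every nonzero `v ∈ V` and `(1/n) log ‖P n v‖ → γ` for every
`v ∉ V`. -/
theorem oseledec_ruelle
    (A : ℕ → Matrix (Fin 2) (Fin 2) ℝ)
    (hdet : ∀ n, (A n).det = 1)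
    (P : ℕ → Matrix (Fin 2) (Fin 2) ℝ)
    (hP0 : P 0 = 1)
    (hPsucc : ∀ n : ℕ, P (n + 1) = A (n + 1) * P n)
    (hA : Tendsto (fun n : ℕ => (1 / (n : ℝ)) * Real.log (opNorm (A n))) atTop (nhds 0))
    (γ : ℝ) (hγ : 0 < γ)
    (hP : Tendsto (fun n : ℕ => (1 / (n : ℝ)) * Real.log (opNorm (P n))) atTop (nhds γ)) :
    ∃ V : Submodule ℝ (EuclideanSpace ℝ (Fin 2)), Module.finrank ℝ V = 1 ∧
      (∀ v ∈ V, v ≠ 0 →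
        Tendsto (fun n : ℕ => (1 / (n : ℝ)) *
          Real.log ‖Matrix.toEuclideanCLM (𝕜 := ℝ) (P n) v‖) atTop (nhds (-γ))) ∧
      (∀ v : EuclideanSpace ℝ (Fin 2), v ∉ V →
        Tendsto (fun n : ℕ => (1 / (n : ℝ)) *
          Real.log ‖Matrix.toEuclideanCLM (𝕜 := ℝ) (P n) v‖) atTop (nhds γ)) := by
  have hdetP : ∀ n, (P n).det = 1 := by
    intro n
    induction n with
    | zero => simp [hP0]
    | succ n ih => rw [hPsucc, Matrix.det_mul, hdet, ih, mul_one]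
  have hdetCLM (M : Matrix (Fin 2) (Fin 2) ℝ) : (Matrix.toEuclideanCLM (𝕜 := ℝ) M).det = M.det :=
    LinearMap.det_toLpLin 2 M
  exact exists_oseledets_subspace finrank_euclideanSpace_fin
    (fun n => (hdetCLM _).trans (hdet n)) (fun n => (hdetCLM _).trans (hdetP n))
    (fun n => by rw [hPsucc]; exact map_mul _ _ _) hA hγ hP
end
end

section
/- Let T be a measure-preserving transformation of a probability space (Ω, μ), and let f ∈ L¹(Ω, μ) be such that for μ-almost every ω, the Birkhoff sums ∑_{m=0}^{n-1} f(T^m ω) tend to +∞ as n → ∞. Then ∫ f dμ > 0. -/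
/-! If `S_n f x → ∞`, then after the last time `k` at which `n ↦ S_n f x` attains its minimum,
all Birkhoff sums from `T^k x` stay `≥ δ` for some `δ > 0`; hence the set `B` of points from
which all Birkhoff sums are `≥ δ` has positive measure for some `δ`. Between consecutive visits
to `B` the sums of `f` grow by at least `δ`, so the Birkhoff sums of `h = f - δ 𝟙_B` are bounded
below wherever those of `f` are. Bounded-below Birkhoff sums force `∫ h ≥ 0`: `∫ h = ∫ S_n h / n`
and the negative parts of `S_n h / n` tend to `0` in `L¹` (by dominated convergence when `h` is
bounded below, then by truncating `h`). Hence `∫ f ≥ δ μ(B) > 0`. -/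

open MeasureTheory Filter Set
open scoped Topology

section BirkhoffSum

variable {α M : Type*}

theorem birkhoffSum_mono [AddCommMonoid M] [PartialOrder M] [IsOrderedAddMonoid M]
    (T : α → α) {g g' : α → M} (hg : g ≤ g') (n : ℕ) (x : α) :
    birkhoffSum T g n x ≤ birkhoffSum T g' n x :=
  Finset.sum_le_sum fun _ _ => hg _

theorem nsmul_le_birkhoffSum [AddCommMonoid M] [PartialOrder M] [IsOrderedAddMonoid M]
    (T : α → α) {g : α → M} {c : M} (hc : ∀ x, c ≤ g x) (n : ℕ) (x : α) :
    n • c ≤ birkhoffSum T g n x := by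
  simpa [birkhoffSum] using
    Finset.card_nsmul_le_sum (Finset.range n) (fun k => g (T^[k] x)) c fun _ _ => hc _

def birkhoffSumsGeSet (T : α → α) (f : α → ℝ) (δ : ℝ) : Set α :=
  {x | ∀ n, δ ≤ birkhoffSum T f (n + 1) x}

theorem birkhoffSumsGeSet_anti (T : α → α) (f : α → ℝ) : Antitone (birkhoffSumsGeSet T f) :=
  fun _ _ hδ _ hx n => hδ.trans (hx n)

theorem le_birkhoffSum_sub_indicator {T : α → α} {f : α → ℝ} {δ C : ℝ} (n : ℕ) (x : α)
    (hC : ∀ k ≤ n, C ≤ birkhoffSum T f k x) :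
    C ≤ birkhoffSum T (f - (birkhoffSumsGeSet T f δ).indicator fun _ => δ) n x := by
  induction n generalizing x C with
  | zero => simpa using hC 0 le_rfl
  | succ n ih =>
    have hshift (k : ℕ) : birkhoffSum T f k (T x) = birkhoffSum T f (k + 1) x - f x := by
      rw [birkhoffSum_succ']; ring
    rw [birkhoffSum_succ']
    by_cases hx : x ∈ birkhoffSumsGeSet T f δ
    · -- from a point of the set all later sums of `f` are `≥ δ`, which pays for the indicator
      have hC0 : C ≤ 0 := by simpa using hC 0 (Nat.zero_le _)
      have := ih (C := δ - f x) (T x) fun k _ => by rw [hshift]; linarith [hx k]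
      simp only [Pi.sub_apply, indicator_of_mem hx]
      linarith
    · have := ih (C := C - f x) (T x) fun k hk => by rw [hshift]; linarith [hC (k + 1) (by omega)]
      simp only [Pi.sub_apply, indicator_of_notMem hx]
      linarith

theorem bddBelow_birkhoffSum_sub_indicator {T : α → α} {f : α → ℝ} {x : α} (δ : ℝ)
    (h : BddBelow (range fun n => birkhoffSum T f n x)) :
    BddBelow (range fun n =>
      birkhoffSum T (f - (birkhoffSumsGeSet T f δ).indicator fun _ => δ) n x) := by
  obtain ⟨C, hC⟩ := h
  exact ⟨C, forall_mem_range.2 fun n =>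
    le_birkhoffSum_sub_indicator n x fun k _ => hC (mem_range_self k)⟩

theorem exists_forall_add_le_of_tendsto_atTop {u : ℕ → ℝ} (hu : Tendsto u atTop atTop) :
    ∃ k, ∃ δ > 0, ∀ n > k, u k + δ ≤ u n := by
  obtain ⟨m, hm⟩ := (Nat.cofinite_eq_atTop ▸ hu).exists_forall_le
  obtain ⟨N, hN⟩ := eventually_atTop.1 (hu.eventually_gt_atTop (u m))
  have hmN : m ≤ N := not_lt.1 fun h => lt_irrefl _ (hN m h.le)
  set k := Nat.findGreatest (fun n => u n ≤ u m) N
  have hk : u k = u m :=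
    le_antisymm (Nat.findGreatest_spec (P := fun n => u n ≤ u m) hmN le_rfl) (hm k)
  have hk_lt (n : ℕ) (hn : k < n) : u k < u n := by
    rw [hk]
    rcases le_or_gt n N with hnN | hnN
    · exact not_le.1 (Nat.findGreatest_is_greatest hn hnN)
    · exact hN n hnN.le
  have hv : Tendsto (fun i => u (i + (k + 1)) - u k) atTop atTop :=
    tendsto_atTop_add_const_right _ _ (hu.comp (tendsto_add_atTop_nat (k + 1)))
  obtain ⟨i₀, hi₀⟩ := (Nat.cofinite_eq_atTop ▸ hv).exists_forall_le
  refine ⟨k, _, sub_pos.2 (hk_lt (i₀ + (k + 1)) (by omega)), fun n hn => ?_⟩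
  have := hi₀ (n - (k + 1))
  rw [Nat.sub_add_cancel hn] at this
  linarith

theorem exists_iterate_mem_birkhoffSumsGeSet {T : α → α} {f : α → ℝ} {x : α}
    (h : Tendsto (fun n => birkhoffSum T f n x) atTop atTop) :
    ∃ k, ∃ δ > 0, T^[k] x ∈ birkhoffSumsGeSet T f δ := by
  obtain ⟨k, δ, hδ, hk⟩ := exists_forall_add_le_of_tendsto_atTop h
  refine ⟨k, δ, hδ, fun i => ?_⟩
  have := birkhoffSum_add T f k (i + 1) x
  linarith [hk (k + (i + 1)) (by omega)]

end BirkhoffSum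

section MeasurePreserving

variable {Ω : Type*} [MeasurableSpace Ω] {μ : Measure Ω} {T : Ω → Ω}

theorem measurableSet_birkhoffSumsGeSet (hT : Measurable T) {f : Ω → ℝ} (hf : Measurable f)
    (δ : ℝ) :
    MeasurableSet (birkhoffSumsGeSet T f δ) := by
  simp only [birkhoffSumsGeSet, ofPred_forall]
  exact .iInter fun n => measurableSet_le measurable_const <|
    Finset.measurable_sum _ fun k _ => hf.comp (hT.iterate k)

theorem exists_pos_measure_birkhoffSumsGeSet [NeZero μ]
    (hT : Measure.QuasiMeasurePreserving T μ μ) {f : Ω → ℝ}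
    (hdiv : ∀ᵐ x ∂μ, Tendsto (fun n => birkhoffSum T f n x) atTop atTop) :
    ∃ δ > 0, 0 < μ (birkhoffSumsGeSet T f δ) := by
  by_contra! h
  have hnull : ∀ᵐ x ∂μ, ∀ k j : ℕ, T^[k] x ∉ birkhoffSumsGeSet T f (1 / (j + 1)) := by
    simp only [ae_all_iff]
    exact fun k j => measure_eq_zero_iff_ae_notMem.1 <|
      (hT.iterate k).preimage_null (nonpos_iff_eq_zero.1 (h _ (by positivity)))
  obtain ⟨x, hx, hxdiv⟩ := (hnull.and hdiv).exists
  obtain ⟨k, δ, hδ, hkδ⟩ := exists_iterate_mem_birkhoffSumsGeSet hxdiv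
  obtain ⟨j, hj⟩ := exists_nat_one_div_lt hδ
  exact hx k j (birkhoffSumsGeSet_anti T f hj.le hkδ)

variable {E : Type*} [NormedAddCommGroup E]

theorem MeasureTheory.MeasurePreserving.integrable_birkhoffSum (hT : MeasurePreserving T μ μ)
    {g : Ω → E} (hg : Integrable g μ) (n : ℕ) : Integrable (birkhoffSum T g n) μ :=
  integrable_finsetSum _ fun k _ => (hT.iterate k).integrable_comp_of_integrable hg

theorem MeasureTheory.MeasurePreserving.integral_birkhoffSum [NormedSpace ℝ E]
    (hT : MeasurePreserving T μ μ) {g : Ω → E} (hg : Integrable g μ) (n : ℕ) :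
    ∫ x, birkhoffSum T g n x ∂μ = n • ∫ x, g x ∂μ := by
  have hcomp (k : ℕ) : ∫ x, g (T^[k] x) ∂μ = ∫ x, g x ∂μ := by
    have hk := hT.iterate k
    rw [← integral_map hk.aemeasurable (by rw [hk.map_eq]; exact hg.aestronglyMeasurable),
      hk.map_eq]
  simp only [birkhoffSum]
  rw [integral_finsetSum (f := fun k x => g (T^[k] x)) _
    fun k _ => (hT.iterate k).integrable_comp_of_integrable hg]
  simp [hcomp]

theorem integral_nonneg_of_bddBelow_birkhoffSum_of_le [IsFiniteMeasure μ]
    (hT : MeasurePreserving T μ μ) {h : Ω → ℝ} (hh : Integrable h μ) {c : ℝ} (hc : ∀ x, c ≤ h x)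
    (hbdd : ∀ᵐ x ∂μ, BddBelow (range fun n => birkhoffSum T h n x)) :
    0 ≤ ∫ x, h x ∂μ := by
  set φ : ℕ → Ω → ℝ := fun n x => min (birkhoffSum T h n x / n) 0
  have hφ_meas (n : ℕ) : AEStronglyMeasurable (φ n) μ :=
    ((hT.integrable_birkhoffSum hh n).div_const (n : ℝ)).aestronglyMeasurable.inf
      aestronglyMeasurable_const
  have hφ_bound (n : ℕ) (x : Ω) : ‖φ n x‖ ≤ |c| := by
    have hmin : min c 0 ≤ birkhoffSum T h n x / n := by
      rcases n.eq_zero_or_pos with rfl | hn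
      · simp
      · rw [le_div_iff₀' (by exact_mod_cast hn)]
        exact (mul_le_mul_of_nonneg_left (min_le_left c 0) n.cast_nonneg).trans
          (by simpa using nsmul_le_birkhoffSum T hc n x)
    rw [Real.norm_eq_abs, abs_of_nonpos (min_le_right _ _), neg_le]
    exact (le_min (neg_abs_le c) (neg_nonpos.2 (abs_nonneg c))).trans
      (le_min hmin (min_le_right c 0))
  have hφ_lim : ∀ᵐ x ∂μ, Tendsto (fun n => φ n x) atTop (𝓝 0) := by
    filter_upwards [hbdd] with x ⟨C, hC⟩
    have hlow : Tendsto (fun n : ℕ => min (C / n) 0) atTop (𝓝 0) := by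
      simpa using
        (tendsto_const_div_atTop_nhds_zero_nat C).min (tendsto_const_nhds (x := (0 : ℝ)))
    exact tendsto_of_tendsto_of_tendsto_of_le_of_le hlow tendsto_const_nhds
      (fun n => min_le_min_right 0 (div_le_div_of_nonneg_right (hC (mem_range_self n))
        n.cast_nonneg)) (fun n => min_le_right _ _)
  have hlim : Tendsto (fun n => ∫ x, φ n x ∂μ) atTop (𝓝 0) := by
    simpa using tendsto_integral_of_dominated_convergence (fun _ => |c|) hφ_meas
      (integrable_const _) (fun n => ae_of_all _ (hφ_bound n)) hφ_lim
  refine le_of_tendsto hlim (eventually_atTop.2 ⟨1, fun n hn => ?_⟩)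
  calc ∫ x, φ n x ∂μ
      ≤ ∫ x, birkhoffSum T h n x / n ∂μ :=
        integral_mono ((integrable_const |c|).mono' (hφ_meas n) (ae_of_all _ (hφ_bound n)))
          ((hT.integrable_birkhoffSum hh n).div_const _) fun x => min_le_left _ _
    _ = ∫ x, h x ∂μ := by
        rw [integral_div, hT.integral_birkhoffSum hh, nsmul_eq_mul]
        field_simp

theorem integral_nonneg_of_bddBelow_birkhoffSum [IsFiniteMeasure μ]
    (hT : MeasurePreserving T μ μ) {h : Ω → ℝ} (hh : Integrable h μ)
    (hbdd : ∀ᵐ x ∂μ, BddBelow (range fun n => birkhoffSum T h n x)) :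
    0 ≤ ∫ x, h x ∂μ := by
  set h' : ℕ → Ω → ℝ := fun c x => max (h x) (-c)
  have hh'_meas (c : ℕ) : AEStronglyMeasurable (h' c) μ :=
    hh.aestronglyMeasurable.sup aestronglyMeasurable_const
  have hh'_bound (c : ℕ) (x : Ω) : ‖h' c x‖ ≤ ‖h x‖ := by
    rw [Real.norm_eq_abs, Real.norm_eq_abs, abs_le]
    exact ⟨(neg_abs_le _).trans (le_max_left _ _), max_le (le_abs_self _)
      ((neg_nonpos.2 c.cast_nonneg).trans (abs_nonneg _))⟩
  have hh' (c : ℕ) : Integrable (h' c) μ :=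
    hh.norm.mono' (hh'_meas c) (ae_of_all _ (hh'_bound c))
  have hnonneg (c : ℕ) : 0 ≤ ∫ x, h' c x ∂μ := by
    refine integral_nonneg_of_bddBelow_birkhoffSum_of_le hT (hh' c) (fun _ => le_max_right _ _) ?_
    filter_upwards [hbdd] with x ⟨C, hC⟩
    exact ⟨C, forall_mem_range.2 fun n =>
      (hC (mem_range_self n)).trans (birkhoffSum_mono T (fun x => le_max_left _ _) n x)⟩
  have hlim : Tendsto (fun c => ∫ x, h' c x ∂μ) atTop (𝓝 (∫ x, h x ∂μ)) := by
    refine tendsto_integral_of_dominated_convergence _ hh'_meas hh.norm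
      (fun c => ae_of_all _ (hh'_bound c)) (ae_of_all _ fun x => ?_)
    obtain ⟨N, hN⟩ := exists_nat_ge (-h x)
    exact tendsto_const_nhds.congr' (eventually_atTop.2 ⟨N, fun c hc =>
      (max_eq_left (by linarith [(Nat.cast_le (α := ℝ)).2 hc])).symm⟩)
  exact ge_of_tendsto' hlim hnonneg

theorem integral_pos_of_tendsto_birkhoffSum [IsFiniteMeasure μ] [NeZero μ]
    (hT : MeasurePreserving T μ μ) {f : Ω → ℝ} (hfm : Measurable f) (hf : Integrable f μ)
    (hdiv : ∀ᵐ x ∂μ, Tendsto (fun n => birkhoffSum T f n x) atTop atTop) :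
    0 < ∫ x, f x ∂μ := by
  obtain ⟨δ, hδ, hpos⟩ := exists_pos_measure_birkhoffSumsGeSet hT.quasiMeasurePreserving hdiv
  have hB := measurableSet_birkhoffSumsGeSet hT.measurable hfm δ
  have hind : Integrable ((birkhoffSumsGeSet T f δ).indicator fun _ => δ) μ :=
    (integrable_const δ).indicator hB
  have hnonneg := integral_nonneg_of_bddBelow_birkhoffSum hT (hf.sub hind) <|
    hdiv.mono fun x hx => bddBelow_birkhoffSum_sub_indicator δ
      (bddBelow_range_of_tendsto_atTop_atTop hx)
  simp only [Pi.sub_apply] at hnonneg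
  rw [integral_sub hf hind, integral_indicator_const _ hB, smul_eq_mul] at hnonneg
  have : 0 < μ.real (birkhoffSumsGeSet T f δ) * δ :=
    mul_pos (ENNReal.toReal_pos hpos.ne' (measure_ne_top _ _)) hδ
  linarith

end MeasurePreserving

/-- If `T` is a measure-preserving transformation of a probability space `(Ω, μ)` and
`f ∈ L¹(Ω, μ)` is such that the Birkhoff sums `∑_{m=0}^{n-1} f(T^m ω)` tend to `+∞` for
`μ`-almost every `ω`, then `∫ f dμ > 0`. -/
theorem pos_integral_of_birkhoff_sums_tendsto_atTop
    {Ω : Type*} [MeasurableSpace Ω]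
    (μ : Measure Ω) [IsProbabilityMeasure μ]
    (T : Ω → Ω) (hT : MeasurePreserving T μ μ)
    (f : Ω → ℝ) (hf : Integrable f μ)
    (hdiv : ∀ᵐ ω ∂μ,
      Tendsto (fun n : ℕ => ∑ m ∈ Finset.range n, f (T^[m] ω)) atTop atTop) :
    0 < ∫ ω, f ω ∂μ := by
  obtain ⟨g, hgm, hfg⟩ := hf.aemeasurable
  have hdiv' : ∀ᵐ ω ∂μ, Tendsto (fun n => birkhoffSum T g n ω) atTop atTop := by
    filter_upwards [hdiv,
      ae_all_iff.2 (hT.quasiMeasurePreserving.birkhoffSum_ae_eq_of_ae_eq hfg)] with ω hω hfg_ω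
    exact hω.congr hfg_ω
  rw [integral_congr_ae hfg]
  exact integral_pos_of_tendsto_birkhoffSum hT hgm (hf.congr hfg) hdiv'
end

section
/- For z ∈ ℂ with Im z ≠ 0, the function x ↦ 1/(x - z) - 1/(x + i) is Lebesgue integrable on ℝ, and ∫_ℝ ( 1/(x - z) - 1/(x + i) ) dx equals 2πi if Im z > 0 and equals 0 if Im z < 0. -/
/-!
The integrand is the derivative of `F x = log (x - z) - log (x + i)`, a branch of the logarithm
being continuous along the whole real line because `z` and `-i` are not real. At `+∞` both
logarithms differ from `Real.log x` by `o(1)`, so `F → 0`. At `-∞`, `x - c` approaches the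
negative real axis from the side opposite to `c`, so `log (x - c) - Real.log (-x)` tends to
`-sign (Im c) · πi`; hence `F` tends to `-2πi` or `0` according to the sign of `Im z`.
Integrability comes from `|x - z|⁻¹ |x + i|⁻¹ ≤ (|x - z|⁻² + |x + i|⁻²) / 2`, each term being a
rescaled translate of `(1 + x²)⁻¹`.
-/

open MeasureTheory Filter Topology Complex
open scoped Real

lemma norm_ofReal_sub_sq (c : ℂ) (x : ℝ) : ‖(x : ℂ) - c‖ ^ 2 = (x - c.re) ^ 2 + c.im ^ 2 := by
  rw [Complex.sq_norm, Complex.normSq_apply]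
  simp only [sub_re, ofReal_re, sub_im, ofReal_im, zero_sub, mul_neg, neg_mul, neg_neg]
  ring

lemma integrable_inv_norm_ofReal_sub_sq {c : ℂ} (hc : c.im ≠ 0) :
    Integrable fun x : ℝ => (‖(x : ℂ) - c‖ ^ 2)⁻¹ := by
  have h := ((integrable_inv_one_add_sq.comp_div hc).comp_sub_right c.re).const_mul (c.im ^ 2)⁻¹
  refine h.congr (Eventually.of_forall fun x => ?_)
  simp only [norm_ofReal_sub_sq]
  field_simp
  ring

lemma integrable_inv_ofReal_sub_mul_inv_ofReal_sub {c d : ℂ} (hc : c.im ≠ 0) (hd : d.im ≠ 0) :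
    Integrable fun x : ℝ => ((x : ℂ) - c)⁻¹ * ((x : ℂ) - d)⁻¹ := by
  refine (((integrable_inv_norm_ofReal_sub_sq hc).add
    (integrable_inv_norm_ofReal_sub_sq hd)).div_const 2).mono' (by fun_prop)
    (Eventually.of_forall fun x => ?_)
  rw [norm_mul, norm_inv, norm_inv, Pi.add_apply, ← inv_pow, ← inv_pow]
  linarith [two_mul_le_add_sq ‖((x : ℂ) - c)‖⁻¹ ‖((x : ℂ) - d)‖⁻¹]

lemma ofReal_sub_ne_zero {c : ℂ} (hc : c.im ≠ 0) (x : ℝ) : (x : ℂ) - c ≠ 0 := by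
  intro h; apply hc; simpa using congrArg Complex.im h

lemma integrable_inv_ofReal_sub_sub_inv_ofReal_sub {c d : ℂ} (hc : c.im ≠ 0) (hd : d.im ≠ 0) :
    Integrable fun x : ℝ => ((x : ℂ) - c)⁻¹ - ((x : ℂ) - d)⁻¹ := by
  refine ((integrable_inv_ofReal_sub_mul_inv_ofReal_sub hc hd).const_mul (c - d)).congr
    (Eventually.of_forall fun x => ?_)
  have := ofReal_sub_ne_zero hc x
  have := ofReal_sub_ne_zero hd x
  field_simp
  ring

lemma hasDerivAt_log_ofReal_sub {c : ℂ} (hc : c.im ≠ 0) (x : ℝ) :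
    HasDerivAt (fun x : ℝ => log ((x : ℂ) - c)) ((x : ℂ) - c)⁻¹ x := by
  simpa [one_div] using ((hasDerivAt_id x).ofReal_comp.sub_const c).clog_real
    (mem_slitPlane_iff.2 (Or.inr (by simpa using hc)))

lemma tendsto_log_mul_ofReal_sub_sub_log {σ L c : ℂ} {s : Set ℂ} (hσ : σ ≠ 0)
    (hlog : Tendsto log (𝓝[s] σ) (𝓝 L)) (hs : ∀ᶠ y : ℝ in atTop, σ - c / y ∈ s) :
    Tendsto (fun y : ℝ => log (σ * y - c) - Real.log y) atTop (𝓝 L) := by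
  have hlim : Tendsto (fun y : ℝ => σ - c / y) atTop (𝓝 σ) := by
    have := ((continuous_ofReal.tendsto 0).comp tendsto_inv_atTop_zero).const_mul c
    simpa [div_eq_mul_inv] using this.const_sub σ
  refine (hlog.comp (tendsto_nhdsWithin_iff.2 ⟨hlim, hs⟩)).congr' ?_
  filter_upwards [eventually_gt_atTop 0, hlim.eventually_ne hσ] with y hy hne
  have : σ * y - c = (y : ℂ) * (σ - c / y) := by
    field_simp [ofReal_ne_zero.2 hy.ne']
  simp [this, log_ofReal_mul hy hne]

lemma tendsto_log_ofReal_sub_sub_log_atTop (c : ℂ) :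
    Tendsto (fun x : ℝ => log ((x : ℂ) - c) - Real.log x) atTop (𝓝 0) := by
  have hlog : Tendsto log (𝓝[Set.univ] 1) (𝓝 0) := by
    simpa using (continuousAt_clog (by simp : (1 : ℂ) ∈ slitPlane)).tendsto
  simpa using tendsto_log_mul_ofReal_sub_sub_log (c := c) one_ne_zero hlog (by simp)

lemma tendsto_log_ofReal_sub_sub_log_neg_atBot {c : ℂ} (hc : c.im ≠ 0) :
    Tendsto (fun x : ℝ => log ((x : ℂ) - c) - Real.log (-x)) atBot
      (𝓝 (-(Real.sign c.im * π * I))) := by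
  suffices Tendsto (fun y : ℝ => log (-1 * y - c) - Real.log y) atTop
      (𝓝 (-(Real.sign c.im * π * I))) by
    simpa [Function.comp_def] using this.comp tendsto_neg_atBot_atTop
  rcases hc.lt_or_gt with hc | hc
  · refine tendsto_log_mul_ofReal_sub_sub_log (s := {w | 0 ≤ w.im}) (by simp) ?_ ?_
    · simpa [Real.sign_of_neg hc, log_neg_one] using
        (continuousWithinAt_log_of_re_neg_of_im_zero (z := -1) (by simp) (by simp)).tendsto
    · filter_upwards [eventually_gt_atTop 0] with y hy
      simpa [div_ofReal_im] using div_nonpos_of_nonpos_of_nonneg hc.le hy.le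
  · refine tendsto_log_mul_ofReal_sub_sub_log (s := {w | w.im < 0}) (by simp) ?_ ?_
    · simpa [Real.sign_of_pos hc] using
        tendsto_log_nhdsWithin_im_neg_of_re_neg_of_im_zero (z := -1) (by simp) (by simp)
    · filter_upwards [eventually_gt_atTop 0] with y hy
      simpa [div_ofReal_im] using div_pos hc hy

theorem integral_inv_ofReal_sub_sub_inv_ofReal_sub {c d : ℂ} (hc : c.im ≠ 0) (hd : d.im ≠ 0) :
    ∫ x : ℝ, (((x : ℂ) - c)⁻¹ - ((x : ℂ) - d)⁻¹) = (Real.sign c.im - Real.sign d.im) * π * I := by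
  have htop := (tendsto_log_ofReal_sub_sub_log_atTop c).sub (tendsto_log_ofReal_sub_sub_log_atTop d)
  have hbot := (tendsto_log_ofReal_sub_sub_log_neg_atBot hc).sub
    (tendsto_log_ofReal_sub_sub_log_neg_atBot hd)
  simp only [sub_sub_sub_cancel_right, sub_zero] at htop hbot
  rw [integral_of_hasDerivAt_of_tendsto
    (fun x => (hasDerivAt_log_ofReal_sub hc x).sub (hasDerivAt_log_ofReal_sub hd x))
    (integrable_inv_ofReal_sub_sub_inv_ofReal_sub hc hd) hbot htop]
  ring

/-- For non-real `z`, the function `x ↦ 1/(x - z) - 1/(x + i)` is Lebesgue integrable on `ℝ`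
and its integral equals `2πi` if `Im z > 0` and `0` if `Im z < 0`. -/
theorem integral_resolvent_kernel_difference
    (z : ℂ) (hz : z.im ≠ 0) :
    Integrable (fun x : ℝ => 1 / ((x : ℂ) - z) - 1 / ((x : ℂ) + Complex.I)) volume ∧
    (0 < z.im →
      ∫ x : ℝ, (1 / ((x : ℂ) - z) - 1 / ((x : ℂ) + Complex.I)) =
        2 * Real.pi * Complex.I) ∧
    (z.im < 0 →
      ∫ x : ℝ, (1 / ((x : ℂ) - z) - 1 / ((x : ℂ) + Complex.I)) = 0) := by
  have hI : (-I).im ≠ 0 := by simp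
  have hf : (fun x : ℝ => 1 / ((x : ℂ) - z) - 1 / ((x : ℂ) + I)) =
      fun x : ℝ => ((x : ℂ) - z)⁻¹ - ((x : ℂ) - -I)⁻¹ := by
    simp only [one_div, sub_neg_eq_add]
  have hintegral := integral_inv_ofReal_sub_sub_inv_ofReal_sub hz hI
  simp only [neg_im, I_im, Real.sign_neg, Real.sign_one] at hintegral
  refine ⟨hf ▸ integrable_inv_ofReal_sub_sub_inv_ofReal_sub hz hI, fun h => ?_, fun h => ?_⟩
  · rw [hf, hintegral, Real.sign_of_pos h]; push_cast; ring
  · rw [hf, hintegral, Real.sign_of_neg h]; push_cast; ring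
end

section
/- Let r : ℝ → ℝ be a bounded, non-negative measurable function with ∫_ℝ r(x) dx = 1, and fix E ∈ ℝ. Define the integral operator T₁ by (T₁ f)(x) = ∫_ℝ r(E - x - y⁻¹) |y|⁻¹ f(y) dy. Then for every f ∈ L²(ℝ), T₁ f ∈ L²(ℝ) with ‖T₁ f‖_{L²} ≤ ‖f‖_{L²}. -/
/-!
Weighted Schur test. Split the kernel as `r(E - x - y⁻¹) |y|⁻¹ = (√r · |y|⁻¹) · √r`. By
Cauchy–Schwarz in `y`, `|T₁ f (x)|² ≤ (∫ r(E - x - y⁻¹) y⁻² dy) · ∫ r(E - x - y⁻¹) |f y|² dy`; the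
first factor is `∫ r(E - x - u) du = 1` after the substitution `u = y⁻¹`, and integrating the
second in `x` first (Tonelli) gives `‖f‖₂²` by translation invariance of Lebesgue measure.
-/

open MeasureTheory

noncomputable section

/-- The Kunz–Souillard integral operator `T₁`:
`(T₁ f)(x) = ∫ r(E - x - y⁻¹) |y|⁻¹ f(y) dy`. -/
def T1 (r : ℝ → ℝ) (E : ℝ) (f : ℝ → ℝ) : ℝ → ℝ :=
  fun x => ∫ y : ℝ, r (E - x - y⁻¹) * |y|⁻¹ * f y

open scoped ENNReal

theorem ENNReal.sq_lintegral_mul_le {β : Type*} [MeasurableSpace β] {ν : Measure β}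
    {a b : β → ℝ≥0∞} (ha : AEMeasurable a ν) (hb : AEMeasurable b ν) :
    (∫⁻ y, a y * b y ∂ν) ^ 2 ≤ (∫⁻ y, a y ^ 2 ∂ν) * ∫⁻ y, b y ^ 2 ∂ν := by
  have h := ENNReal.lintegral_mul_le_Lp_mul_Lq ν Real.HolderConjugate.two_two ha hb
  simp only [ENNReal.rpow_two, Pi.mul_apply] at h
  calc (∫⁻ y, a y * b y ∂ν) ^ 2
      ≤ ((∫⁻ y, a y ^ 2 ∂ν) ^ (1 / 2 : ℝ) * (∫⁻ y, b y ^ 2 ∂ν) ^ (1 / 2 : ℝ)) ^ 2 := by gcongr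
    _ = (∫⁻ y, a y ^ 2 ∂ν) * ∫⁻ y, b y ^ 2 ∂ν := by
      rw [mul_pow, ← ENNReal.rpow_natCast, ← ENNReal.rpow_natCast, ← ENNReal.rpow_mul,
        ← ENNReal.rpow_mul]
      norm_num

theorem lintegral_comp_inv_mul_inv_sq (φ : ℝ → ℝ≥0∞) :
    ∫⁻ y, ENNReal.ofReal (y ^ 2)⁻¹ * φ y⁻¹ = ∫⁻ u, φ u := by
  have hderiv : ∀ y ∈ ({0}ᶜ : Set ℝ), HasDerivWithinAt Inv.inv (-(y ^ 2)⁻¹) {0}ᶜ y :=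
    fun y hy => (hasDerivAt_inv hy).hasDerivWithinAt
  have h := lintegral_image_eq_lintegral_abs_deriv_mul (measurableSet_singleton 0).compl hderiv
    inv_injective.injOn φ
  rw [Set.image_inv_eq_inv, Set.compl_inv, Set.inv_singleton, inv_zero,
    restrict_compl_singleton] at h
  simpa [abs_neg] using h.symm

section SchurTest

variable {α β : Type*} [MeasurableSpace α] [MeasurableSpace β] {μ : Measure α} {ν : Measure β}

theorem sq_eLpNorm_two {E : Type*} [NormedAddCommGroup E] (f : α → E) :
    eLpNorm f 2 μ ^ 2 = ∫⁻ x, ‖f x‖ₑ ^ 2 ∂μ := by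
  simpa [ENNReal.rpow_two] using
    eLpNorm_nnreal_pow_eq_lintegral (μ := μ) (f := f) (p := 2) two_ne_zero

theorem lintegral_sq_lintegral_mul_le [SFinite μ] [SFinite ν] {a b : α → β → ℝ≥0∞}
    {g : β → ℝ≥0∞} (ha : Measurable (Function.uncurry a)) (hb : Measurable (Function.uncurry b))
    (hg : AEMeasurable g ν) (ha_le : ∀ x, ∫⁻ y, a x y ^ 2 ∂ν ≤ 1)
    (hb_le : ∀ y, ∫⁻ x, b x y ^ 2 ∂μ ≤ 1) :
    ∫⁻ x, (∫⁻ y, a x y * (b x y * g y) ∂ν) ^ 2 ∂μ ≤ ∫⁻ y, g y ^ 2 ∂ν := by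
  have hpointwise (x : α) :
      (∫⁻ y, a x y * (b x y * g y) ∂ν) ^ 2 ≤ ∫⁻ y, b x y ^ 2 * g y ^ 2 ∂ν := by
    have hax : Measurable (a x) := ha.comp measurable_prodMk_left
    have hbx : Measurable (b x) := hb.comp measurable_prodMk_left
    calc (∫⁻ y, a x y * (b x y * g y) ∂ν) ^ 2
        ≤ (∫⁻ y, a x y ^ 2 ∂ν) * ∫⁻ y, (b x y * g y) ^ 2 ∂ν :=
          ENNReal.sq_lintegral_mul_le hax.aemeasurable (hbx.aemeasurable.mul hg)
      _ ≤ ∫⁻ y, b x y ^ 2 * g y ^ 2 ∂ν := by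
        simp_rw [mul_pow]
        exact mul_le_of_le_one_left' (ha_le x)
  have hprod : AEMeasurable (Function.uncurry fun x y => b x y ^ 2 * g y ^ 2) (μ.prod ν) :=
    (hb.pow_const 2).aemeasurable.mul (hg.pow_const 2).comp_snd
  calc ∫⁻ x, (∫⁻ y, a x y * (b x y * g y) ∂ν) ^ 2 ∂μ
      ≤ ∫⁻ x, ∫⁻ y, b x y ^ 2 * g y ^ 2 ∂ν ∂μ := lintegral_mono hpointwise
    _ = ∫⁻ y, (∫⁻ x, b x y ^ 2 ∂μ) * g y ^ 2 ∂ν := by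
      rw [lintegral_lintegral_swap hprod]
      exact lintegral_congr fun y =>
        lintegral_mul_const _ ((hb.comp measurable_prodMk_right).pow_const 2)
    _ ≤ ∫⁻ y, g y ^ 2 ∂ν := lintegral_mono fun y => mul_le_of_le_one_left' (hb_le y)

theorem eLpNorm_integral_kernel_mul_le {𝕜 : Type*} [RCLike 𝕜] [SFinite μ] [SFinite ν]
    {K : α → β → 𝕜} {a b : α → β → ℝ≥0∞} {f : β → 𝕜}
    (hK : AEStronglyMeasurable (Function.uncurry K) (μ.prod ν))
    (hK_le : ∀ x y, ‖K x y‖ₑ ≤ a x y * b x y)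
    (ha : Measurable (Function.uncurry a)) (hb : Measurable (Function.uncurry b))
    (ha_le : ∀ x, ∫⁻ y, a x y ^ 2 ∂ν ≤ 1) (hb_le : ∀ y, ∫⁻ x, b x y ^ 2 ∂μ ≤ 1)
    (hf : MemLp f 2 ν) :
    MemLp (fun x => ∫ y, K x y * f y ∂ν) 2 μ ∧
      eLpNorm (fun x => ∫ y, K x y * f y ∂ν) 2 μ ≤ eLpNorm f 2 ν := by
  have hpointwise (x : α) :
      ‖∫ y, K x y * f y ∂ν‖ₑ ≤ ∫⁻ y, a x y * (b x y * ‖f y‖ₑ) ∂ν :=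
    calc ‖∫ y, K x y * f y ∂ν‖ₑ ≤ ∫⁻ y, ‖K x y * f y‖ₑ ∂ν := enorm_integral_le_lintegral_enorm _
      _ ≤ ∫⁻ y, a x y * (b x y * ‖f y‖ₑ) ∂ν := lintegral_mono fun y => by
        rw [enorm_mul, ← mul_assoc]
        gcongr
        exact hK_le x y
  have hsq : eLpNorm (fun x => ∫ y, K x y * f y ∂ν) 2 μ ^ 2 ≤ eLpNorm f 2 ν ^ 2 := by
    rw [sq_eLpNorm_two, sq_eLpNorm_two]
    calc ∫⁻ x, ‖∫ y, K x y * f y ∂ν‖ₑ ^ 2 ∂μ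
        ≤ ∫⁻ x, (∫⁻ y, a x y * (b x y * ‖f y‖ₑ) ∂ν) ^ 2 ∂μ :=
          lintegral_mono fun x => by gcongr; exact hpointwise x
      _ ≤ ∫⁻ y, ‖f y‖ₑ ^ 2 ∂ν :=
          lintegral_sq_lintegral_mul_le ha hb hf.1.enorm ha_le hb_le
  have hle := (ENNReal.pow_le_pow_left_iff two_ne_zero).1 hsq
  exact ⟨⟨(hK.mul hf.1.comp_snd).integral_prod_right', hle.trans_lt hf.2⟩, hle⟩

end SchurTest

theorem lintegral_ofReal_comp_sub_left {r : ℝ → ℝ} (hr_nonneg : ∀ x, 0 ≤ r x)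
    (hr_prob : ∫ x, r x = 1) (c : ℝ) : ∫⁻ x, ENNReal.ofReal (r (c - x)) = 1 := by
  rw [lintegral_sub_left_eq_self (fun x => ENNReal.ofReal (r x)) c,
    ← ofReal_integral_eq_lintegral_ofReal
      (Integrable.of_integral_ne_zero (hr_prob ▸ one_ne_zero)) (ae_of_all _ hr_nonneg),
    hr_prob, ENNReal.ofReal_one]

theorem lintegral_inv_sq_mul_ofReal_comp_sub_inv {r : ℝ → ℝ} (hr_nonneg : ∀ x, 0 ≤ r x)
    (hr_prob : ∫ x, r x = 1) (c : ℝ) :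
    ∫⁻ y, ENNReal.ofReal (y ^ 2)⁻¹ * ENNReal.ofReal (r (c - y⁻¹)) = 1 := by
  rw [lintegral_comp_inv_mul_inv_sq fun u => ENNReal.ofReal (r (c - u)),
    lintegral_ofReal_comp_sub_left hr_nonneg hr_prob]

theorem T1_contraction_general
    (r : ℝ → ℝ) (hr_meas : Measurable r) (hr_nonneg : ∀ x, 0 ≤ r x)
    (hr_prob : ∫ x, r x = 1)
    (E : ℝ) (f : ℝ → ℝ) (hf : MemLp f 2 volume) :
    MemLp (T1 r E f) 2 volume ∧
      eLpNorm (T1 r E f) 2 volume ≤ eLpNorm f 2 volume := by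
  refine eLpNorm_integral_kernel_mul_le (K := fun x y => r (E - x - y⁻¹) * |y|⁻¹)
    (a := fun x y => ENNReal.ofReal (√(r (E - x - y⁻¹)) * |y|⁻¹))
    (b := fun x y => ENNReal.ofReal √(r (E - x - y⁻¹)))
    (by fun_prop) (fun x y => ?_) (by fun_prop) (by fun_prop)
    (fun x => le_of_eq ?_) (fun y => le_of_eq ?_) hf
  · have hr := hr_nonneg (E - x - y⁻¹)
    rw [← ENNReal.ofReal_mul (by positivity), mul_right_comm, Real.mul_self_sqrt hr,
      Real.enorm_eq_ofReal (by positivity)]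
  · rw [← lintegral_inv_sq_mul_ofReal_comp_sub_inv hr_nonneg hr_prob (E - x)]
    refine lintegral_congr fun y => ?_
    rw [← ENNReal.ofReal_pow (by positivity), ← ENNReal.ofReal_mul (by positivity), mul_pow,
      Real.sq_sqrt (hr_nonneg _), inv_pow, sq_abs, mul_comm]
  · rw [← lintegral_ofReal_comp_sub_left hr_nonneg hr_prob (E - y⁻¹)]
    refine lintegral_congr fun x => ?_
    rw [← ENNReal.ofReal_pow (Real.sqrt_nonneg _), Real.sq_sqrt (hr_nonneg _), sub_right_comm]

/-- **The Kunz–Souillard operator `T₁` is a contraction on `L²`.** If `r` is a bounded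
non-negative measurable probability density and `E ∈ ℝ`, then for every `f ∈ L²(ℝ)`,
`T₁ f ∈ L²(ℝ)` and `‖T₁ f‖_{L²} ≤ ‖f‖_{L²}`. -/
theorem T1_contraction
    (r : ℝ → ℝ) (hr_meas : Measurable r) (hr_nonneg : ∀ x, 0 ≤ r x)
    (hr_bdd : ∃ B : ℝ, ∀ x, r x ≤ B)
    (hr_prob : ∫ x, r x = 1)
    (E : ℝ) (f : ℝ → ℝ) (hf : MemLp f 2 volume) :
    MemLp (T1 r E f) 2 volume ∧
      eLpNorm (T1 r E f) 2 volume ≤ eLpNorm f 2 volume :=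
  T1_contraction_general r hr_meas hr_nonneg hr_prob E f hf
end
end
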